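/- arXiv:2603.09795 — 3 statements merged into one kernel-verified Lean document; each statement's English description precedes it below -/
import Mathlib

section
/- If a graph G contains an M-posy relative to some maximum matching M, then G is not a König–Egerváry graph. -/
open SimpleGraph

variable {V : Type*} [DecidableEq V]

/-- `M` is a matching of `G`: a set of edges of `G`, pairwise not sharing a vertex. -/
def IsMatching' (G : SimpleGraph V) (M : Finset (Sym2 V)) : Prop :=
  (↑M : Set (Sym2 V)) ⊆ G.edgeSet ∧
    ∀ e ∈ M, ∀ f ∈ M, e ≠ f → ∀ v : V, ¬(v ∈ e ∧ v ∈ f)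

/-- `M` is a maximum matching of `G`. -/
def IsMaxMatching (G : SimpleGraph V) (M : Finset (Sym2 V)) : Prop :=
  IsMatching' G M ∧ ∀ M' : Finset (Sym2 V), IsMatching' G M' → M'.card ≤ M.card

/-- The vertex `v` is matched (saturated) by `M`. -/
def MatchedBy (M : Finset (Sym2 V)) (v : V) : Prop :=
  ∃ e ∈ M, v ∈ e

/-- A walk is `M`-alternating: consecutive edges alternate between `M` and its complement. -/
def IsAltWalk {G : SimpleGraph V} (M : Finset (Sym2 V)) {u v : V} (w : G.Walk u v) : Prop :=
  w.edges.Chain' (fun e f => e ∈ M ↔ f ∉ M)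

/-- The first edge of the walk belongs to `M`. -/
def StartsMatched {G : SimpleGraph V} (M : Finset (Sym2 V)) {u v : V} (w : G.Walk u v) : Prop :=
  ∃ e, w.edges.head? = some e ∧ e ∈ M

/-- The last edge of the walk belongs to `M`. -/
def EndsMatched {G : SimpleGraph V} (M : Finset (Sym2 V)) {u v : V} (w : G.Walk u v) : Prop :=
  ∃ e, w.edges.getLast? = some e ∧ e ∈ M

/-- The first edge of the walk does not belong to `M`. -/
def StartsUnmatched {G : SimpleGraph V} (M : Finset (Sym2 V)) {u v : V} (w : G.Walk u v) : Prop :=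
  ∃ e, w.edges.head? = some e ∧ e ∉ M

/-- The last edge of the walk does not belong to `M`. -/
def EndsUnmatched {G : SimpleGraph V} (M : Finset (Sym2 V)) {u v : V} (w : G.Walk u v) : Prop :=
  ∃ e, w.edges.getLast? = some e ∧ e ∉ M

/-- An `M`-blossom with base `b`: an odd cycle of length `2k+1` containing exactly `k`
edges of `M`, alternating, whose base `b` is not matched within the cycle. -/
def IsBlossom (G : SimpleGraph V) (M : Finset (Sym2 V)) {b : V} (c : G.Walk b b) : Prop :=
  c.IsCycle ∧ Odd c.length ∧ IsAltWalk M c ∧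
    2 * (c.edges.toFinset ∩ M).card + 1 = c.length ∧
    ∀ e ∈ c.edges, e ∈ M → b ∉ e

/-- An `M`-flower: an `M`-blossom with base `b` together with an even `M`-alternating
stem from `b` to an `M`-unmatched vertex `u`, sharing only the base with the blossom. -/
def IsFlower (G : SimpleGraph V) (M : Finset (Sym2 V)) {b u : V}
    (c : G.Walk b b) (s : G.Walk b u) : Prop :=
  IsBlossom G M c ∧ s.IsPath ∧ Even s.length ∧ IsAltWalk M s ∧
    ¬ MatchedBy M u ∧ ∀ x ∈ s.support, x ∈ c.support → x = b

/-- An `M`-posy: two distinct `M`-blossoms joined by an odd `M`-alternating path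
between their bases, starting and ending with matched edges. -/
def IsPosy (G : SimpleGraph V) (M : Finset (Sym2 V)) {b₁ b₂ : V}
    (c₁ : G.Walk b₁ b₁) (c₂ : G.Walk b₂ b₂) (p : G.Walk b₁ b₂) : Prop :=
  IsBlossom G M c₁ ∧ IsBlossom G M c₂ ∧ (b₁ ≠ b₂ ∨ c₁.edges ≠ c₂.edges) ∧
    p.IsPath ∧ Odd p.length ∧ IsAltWalk M p ∧ StartsMatched M p ∧ EndsMatched M p

/-- An `M`-Tposy: a posy whose connecting path is internally disjoint from both blossoms. -/
def IsTposy (G : SimpleGraph V) (M : Finset (Sym2 V)) {b₁ b₂ : V}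
    (c₁ : G.Walk b₁ b₁) (c₂ : G.Walk b₂ b₂) (p : G.Walk b₁ b₂) : Prop :=
  IsPosy G M c₁ c₂ p ∧
    ∀ x ∈ p.support, x ≠ b₁ → x ≠ b₂ → x ∉ c₁.support ∧ x ∉ c₂.support

/-- An `M`-Jposy: two (not necessarily distinct) `M`-blossoms joined by an odd
`M`-alternating walk between their bases, starting and ending with matched edges. -/
def IsJposy (G : SimpleGraph V) (M : Finset (Sym2 V)) {b₁ b₂ : V}
    (c₁ : G.Walk b₁ b₁) (c₂ : G.Walk b₂ b₂) (w : G.Walk b₁ b₂) : Prop :=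
  IsBlossom G M c₁ ∧ IsBlossom G M c₂ ∧
    Odd w.length ∧ IsAltWalk M w ∧ StartsMatched M w ∧ EndsMatched M w

/-- An `M`-Jflower: an `M`-blossom together with an `M`-alternating walk from its base
to an `M`-unmatched vertex. -/
def IsJflower (G : SimpleGraph V) (M : Finset (Sym2 V)) {b u : V}
    (c : G.Walk b b) (w : G.Walk b u) : Prop :=
  IsBlossom G M c ∧ IsAltWalk M w ∧ ¬ MatchedBy M u

/-- The vertex `x` belongs to some `M`-flower. -/
def InFlower (G : SimpleGraph V) (M : Finset (Sym2 V)) (x : V) : Prop :=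
  ∃ (b u : V) (c : G.Walk b b) (s : G.Walk b u),
    IsFlower G M c s ∧ (x ∈ c.support ∨ x ∈ s.support)

/-- The vertex `x` belongs to some `M`-posy. -/
def InPosy (G : SimpleGraph V) (M : Finset (Sym2 V)) (x : V) : Prop :=
  ∃ (b₁ b₂ : V) (c₁ : G.Walk b₁ b₁) (c₂ : G.Walk b₂ b₂) (p : G.Walk b₁ b₂),
    IsPosy G M c₁ c₂ p ∧ (x ∈ c₁.support ∨ x ∈ c₂.support ∨ x ∈ p.support)

/-- The vertex `x` belongs to some `M`-Tposy. -/
def InTposy (G : SimpleGraph V) (M : Finset (Sym2 V)) (x : V) : Prop :=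
  ∃ (b₁ b₂ : V) (c₁ : G.Walk b₁ b₁) (c₂ : G.Walk b₂ b₂) (p : G.Walk b₁ b₂),
    IsTposy G M c₁ c₂ p ∧ (x ∈ c₁.support ∨ x ∈ c₂.support ∨ x ∈ p.support)

/-- The vertex `x` belongs to some `M`-Jposy. -/
def InJposy (G : SimpleGraph V) (M : Finset (Sym2 V)) (x : V) : Prop :=
  ∃ (b₁ b₂ : V) (c₁ : G.Walk b₁ b₁) (c₂ : G.Walk b₂ b₂) (w : G.Walk b₁ b₂),
    IsJposy G M c₁ c₂ w ∧ (x ∈ c₁.support ∨ x ∈ c₂.support ∨ x ∈ w.support)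

/-- The vertex `x` belongs to some `M`-Jflower. -/
def InJflower (G : SimpleGraph V) (M : Finset (Sym2 V)) (x : V) : Prop :=
  ∃ (b u : V) (c : G.Walk b b) (w : G.Walk b u),
    IsJflower G M c w ∧ (x ∈ c.support ∨ x ∈ w.support)

/-- The independence number of `G`. -/
noncomputable def indepNum (G : SimpleGraph V) : ℕ :=
  sSup {n | ∃ s : Finset V, (∀ u ∈ s, ∀ w ∈ s, ¬ G.Adj u w) ∧ s.card = n}

/-- The matching number of `G`. -/
noncomputable def matchNum (G : SimpleGraph V) : ℕ :=
  sSup {n | ∃ M : Finset (Sym2 V), IsMatching' G M ∧ M.card = n}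

/-- `G` is a König–Egerváry graph: `α(G) + μ(G) = |V(G)|`. -/
def IsKE (G : SimpleGraph V) [Fintype V] : Prop :=
  _root_.indepNum G + matchNum G = Fintype.card V

/-! If `G` is König–Egerváry, the complement `C` of a maximum independent set is a vertex cover
with `|C| = |M|`; since the `M`-edges meet `C` in pairwise disjoint nonempty sets, each of them
has exactly one endpoint in `C`. Walking along an `M`-alternating walk, the invariant
"the current vertex lies in `C` iff the next edge is in `M`" is then preserved: an `M`-edge leaves
`C` and a non-`M`-edge, by the cover property, enters it. Around a blossom, whose two edges at the
base are not in `M`, this forces the base into `C`. Along the connecting path of a posy, which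
starts in `C` with an `M`-edge, it forces the last vertex out of `C`, although that vertex is the
base of the second blossom. -/

section

variable {V : Type*} {G : SimpleGraph V} {M : Finset (Sym2 V)} {C : Set V}

theorem SimpleGraph.Walk.mem_of_edges_head?_eq {u v : V} {w : G.Walk u v} {e : Sym2 V}
    (he : w.edges.head? = some e) : u ∈ e := by
  cases w with
  | nil => simp at he
  | cons h q =>
    simp only [Walk.edges_cons, List.head?_cons, Option.some.injEq] at he
    exact he ▸ Sym2.mem_mk_left _ _

theorem SimpleGraph.Walk.mem_of_edges_getLast?_eq {u v : V} {w : G.Walk u v} {e : Sym2 V}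
    (he : w.edges.getLast? = some e) : v ∈ e :=
  mem_of_edges_head?_eq (w := w.reverse) (by rwa [edges_reverse, List.head?_reverse])

theorem mem_iff_notMem_of_adj (hC : G.IsVertexCover C)
    (hMC : ∀ ⦃x y⦄, s(x, y) ∈ M → x ∈ C → y ∉ C) {x y : V} (hxy : G.Adj x y)
    (hx : x ∈ C ↔ s(x, y) ∈ M) : y ∈ C ↔ s(x, y) ∉ M := by
  by_cases hm : s(x, y) ∈ M
  · exact iff_of_false (hMC hm (hx.2 hm)) (not_not.2 hm)
  · exact iff_of_true ((hC hxy).resolve_left (hx.not.2 hm)) hm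

theorem IsAltWalk.mem_iff_notMem_getLast (hC : G.IsVertexCover C)
    (hMC : ∀ ⦃x y⦄, s(x, y) ∈ M → x ∈ C → y ∉ C) :
    ∀ {u v : V} {w : G.Walk u v}, IsAltWalk M w → ∀ {e f : Sym2 V},
      w.edges.head? = some e → w.edges.getLast? = some f → (u ∈ C ↔ e ∈ M) → (v ∈ C ↔ f ∉ M)
  | _, _, .nil, _, _, _, he, _, _ => by simp at he
  | _, _, .cons h .nil, _, _, _, he, hf, hu => by
    simp only [Walk.edges_cons, Walk.edges_nil, List.head?_cons, List.getLast?_singleton,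
      Option.some.injEq] at he hf
    subst he hf
    exact mem_iff_notMem_of_adj hC hMC h hu
  | u, _, .cons (v := b) h (.cons (v := c) h' q), halt, _, _, he, hf, hu => by
    obtain ⟨hflip, htail⟩ : (s(u, b) ∈ M ↔ s(b, c) ∉ M) ∧ IsAltWalk M (.cons h' q) :=
      List.isChain_cons_cons.1 halt
    simp only [Walk.edges_cons, List.head?_cons, List.getLast?_cons_cons,
      Option.some.injEq] at he hf
    subst he
    have hb := mem_iff_notMem_of_adj hC hMC h hu
    exact IsAltWalk.mem_iff_notMem_getLast hC hMC htail (e := s(b, c)) rfl (by simpa using hf)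
      (hb.trans <| hflip.not.trans not_not)

theorem matchNum_eq_card (hM : IsMaxMatching G M) :
    matchNum G = M.card :=
  IsGreatest.csSup_eq ⟨⟨M, hM.1, rfl⟩, by rintro _ ⟨M', hM', rfl⟩; exact hM.2 M' hM'⟩

theorem exists_card_eq_indepNum [Fintype V] (G : SimpleGraph V) :
    ∃ s : Finset V, (∀ u ∈ s, ∀ w ∈ s, ¬ G.Adj u w) ∧ s.card = _root_.indepNum G := by
  refine Nat.sSup_mem (s := {n | ∃ s : Finset V, (∀ u ∈ s, ∀ w ∈ s, ¬ G.Adj u w) ∧ s.card = n})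
    ⟨0, ∅, by simp, rfl⟩ ⟨Fintype.card V, ?_⟩
  rintro _ ⟨s, -, rfl⟩
  exact s.card_le_univ

end

section

variable {G : SimpleGraph V} {M : Finset (Sym2 V)}

theorem IsBlossom.base_mem {C : Set V} (hC : G.IsVertexCover C)
    (hMC : ∀ ⦃x y⦄, s(x, y) ∈ M → x ∈ C → y ∉ C) {b : V} {c : G.Walk b b}
    (hB : IsBlossom G M c) : b ∈ C := by
  obtain ⟨-, hodd, halt, -, hbase⟩ := hB
  have hne : c.edges ≠ [] := by
    intro hnil
    simp [← Walk.length_edges, hnil] at hodd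
  have he := List.head?_eq_some_head hne
  have hf := List.getLast?_eq_some_getLast hne
  have heM : c.edges.head hne ∉ M := fun hm =>
    hbase _ (List.head_mem hne) hm (Walk.mem_of_edges_head?_eq he)
  have hfM : c.edges.getLast hne ∉ M := fun hm =>
    hbase _ (List.getLast_mem hne) hm (Walk.mem_of_edges_getLast?_eq hf)
  by_contra hb
  exact hb ((halt.mem_iff_notMem_getLast hC hMC he hf (iff_of_false hb heM)).2 hfM)

theorem IsMatching'.notMem_of_card_le_of_isVertexCover {C : Finset V} (hM : IsMatching' G M)
    (hC : G.IsVertexCover ↑C) (hcard : C.card ≤ M.card) ⦃x y : V⦄ (hxy : s(x, y) ∈ M)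
    (hx : x ∈ C) : y ∉ C := by
  intro hy
  let t (e : Sym2 V) : Finset V := C.filter (· ∈ e)
  have ht_pos : ∀ e ∈ M, 1 ≤ (t e).card := by
    intro e he
    induction e using Sym2.ind with
    | _ a b =>
      obtain ha | hb := hC (hM.1 he)
      · exact Finset.card_pos.2 ⟨a, Finset.mem_filter.2 ⟨ha, Sym2.mem_mk_left _ _⟩⟩
      · exact Finset.card_pos.2 ⟨b, Finset.mem_filter.2 ⟨hb, Sym2.mem_mk_right _ _⟩⟩
  have ht_two : 1 < (t s(x, y)).card :=
    Finset.one_lt_card.2 ⟨x, by simp [t, hx], y, by simp [t, hy], G.ne_of_adj (hM.1 hxy)⟩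
  have ht_disj : (M : Set (Sym2 V)).PairwiseDisjoint t := fun e he f hf hef =>
    Finset.disjoint_left.2 fun v hve hvf =>
      hM.2 e he f hf hef v ⟨(Finset.mem_filter.1 hve).2, (Finset.mem_filter.1 hvf).2⟩
  have hsum_le : ∑ e ∈ M, (t e).card ≤ C.card := by
    rw [← Finset.card_biUnion ht_disj]
    exact Finset.card_le_card (Finset.biUnion_subset.2 fun e _ => Finset.filter_subset _ _)
  have hsum_gt : ∑ _e ∈ M, 1 < ∑ e ∈ M, (t e).card := Finset.sum_lt_sum ht_pos ⟨_, hxy, ht_two⟩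
  rw [Finset.sum_const, smul_eq_mul, mul_one] at hsum_gt
  omega

theorem IsKE.exists_isVertexCover_card_eq [Fintype V] (hKE : IsKE G) (hM : IsMaxMatching G M) :
    ∃ C : Finset V, G.IsVertexCover ↑C ∧ C.card = M.card := by
  obtain ⟨s, hs, hcard⟩ := exists_card_eq_indepNum G
  refine ⟨sᶜ, fun x y hxy => ?_, ?_⟩
  · by_contra! hxy'
    simp only [Finset.coe_compl, Set.mem_compl_iff, Finset.mem_coe, not_not] at hxy'
    exact hs x hxy'.1 y hxy'.2 hxy
  · have hKE' : _root_.indepNum G + matchNum G = Fintype.card V := hKE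
    rw [Finset.card_compl, ← hKE', hcard, matchNum_eq_card hM]
    omega

end

/-- If `G` contains an `M`-posy relative to some maximum matching `M`,
then `G` is not a König–Egerváry graph. -/
theorem stmt_2 {V : Type*} [DecidableEq V] [Fintype V] (G : SimpleGraph V)
    (M : Finset (Sym2 V)) (hM : IsMaxMatching G M)
    (h : ∃ (b₁ b₂ : V) (c₁ : G.Walk b₁ b₁) (c₂ : G.Walk b₂ b₂) (p : G.Walk b₁ b₂),
      IsPosy G M c₁ c₂ p) :
    ¬ IsKE G := by
  intro hKE
  obtain ⟨b₁, b₂, c₁, c₂, p, hB₁, hB₂, -, -, -, hp, ⟨e, he, heM⟩, ⟨f, hf, hfM⟩⟩ := h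
  obtain ⟨C, hC, hcard⟩ := hKE.exists_isVertexCover_card_eq hM
  have hMC := hM.1.notMem_of_card_le_of_isVertexCover hC hcard.le
  have hb₂ := hp.mem_iff_notMem_getLast hC hMC he hf (iff_of_true (hB₁.base_mem hC hMC) heM)
  exact hb₂.1 (hB₂.base_mem hC hMC) hfM
end

section
/- Let G be a graph with a perfect matching. Then G has the König–Egerváry property if and only if G has no M-Jposy relative to any perfect matching M of G. -/
open SimpleGraph

variable {V : Type*} [DecidableEq V]

/-!
With a perfect matching `M`, `α(G) + μ(G) = |V|` says exactly that `G` has an independent set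
`S` containing one end of every edge of `M`. Finding such an `S` is a 2-SAT problem: `x ∈ S`
forces `mate z ∈ S` for every neighbour `z` of `x` with `xz ∉ M`.

If `S` exists, membership in `S` along an `M`-alternating walk is governed by parity. A blossom
is an odd alternating closed walk whose base has two unmatched edges, so its base lies outside
`S`; an odd alternating walk starting and ending with matched edges leads from outside `S` into
`S`, so it cannot join two bases, and there is no Jposy.

Conversely, the 2-SAT instance is solvable unless some `x` forces `mate x` and `mate x` forces
`x`. A forcing chain from `x` to `mate x` is an odd alternating closed walk at `x` with unmatched
end edges; cutting out its even closed subwalks leaves a blossom reached from `x` by an even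
alternating stem. The two stems so obtained, joined by the edge `x (mate x)`, make a Jposy.
-/

open Finset Relation

section

variable {V : Type*} {G : SimpleGraph V} {M : Finset (Sym2 V)} {S : Finset V} {v w x y : V}

lemma IsMatching'.eq_of_mem_of_mem (hM : IsMatching' G M) {e f : Sym2 V} (he : e ∈ M)
    (hf : f ∈ M) (hve : v ∈ e) (hvf : v ∈ f) : e = f := by
  by_contra hne
  exact hM.2 e he f hf hne v ⟨hve, hvf⟩

open Classical in
/-- The partner of `v` in `M`, with the junk value `v` when `v` is unmatched. -/
noncomputable def mate (M : Finset (Sym2 V)) (v : V) : V :=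
  if h : ∃ w, s(v, w) ∈ M then h.choose else v

lemma mk_mate_mem (hv : MatchedBy M v) : s(v, mate M v) ∈ M := by
  obtain ⟨e, he, hve⟩ := hv
  obtain ⟨w, rfl⟩ := Sym2.mem_iff_exists.mp hve
  have h : ∃ w, s(v, w) ∈ M := ⟨w, he⟩
  rw [mate, dif_pos h]
  exact h.choose_spec

lemma IsMatching'.mate_eq (hM : IsMatching' G M) (h : s(v, w) ∈ M) : mate M v = w := by
  have hv : MatchedBy M v := ⟨_, h, Sym2.mem_mk_left _ _⟩
  exact Sym2.congr_right.mp
    (hM.eq_of_mem_of_mem (mk_mate_mem hv) h (Sym2.mem_mk_left _ _) (Sym2.mem_mk_left _ _))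

lemma IsMatching'.mate_mate (hM : IsMatching' G M) (hv : MatchedBy M v) :
    mate M (mate M v) = v :=
  hM.mate_eq (Sym2.eq_swap ▸ mk_mate_mem hv)

lemma IsMatching'.adj_mate (hM : IsMatching' G M) (hv : MatchedBy M v) : G.Adj v (mate M v) :=
  hM.1 (mk_mate_mem hv)

lemma IsMatching'.eq_mk_mate (hM : IsMatching' G M) {e : Sym2 V} (he : e ∈ M) (hv : v ∈ e) :
    e = s(v, mate M v) :=
  hM.eq_of_mem_of_mem he (mk_mate_mem ⟨e, he, hv⟩) hv (Sym2.mem_mk_left _ _)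

lemma injOn_mk_mate (hS : ∀ v ∈ S, mate M v ∉ S) : Set.InjOn (fun v => s(v, mate M v)) S := by
  intro u hu w hw (h : s(u, mate M u) = s(w, mate M w))
  have hw' : w ∈ s(u, mate M u) := h ▸ Sym2.mem_mk_left w (mate M w)
  rcases Sym2.mem_iff.mp hw' with rfl | rfl
  · rfl
  · exact absurd hw (hS u hu)

def IsIndepTransversal (G : SimpleGraph V) (M : Finset (Sym2 V)) (S : Finset V) : Prop :=
  (∀ u ∈ S, ∀ w ∈ S, ¬G.Adj u w) ∧ ∀ v, v ∈ S ↔ mate M v ∉ S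

lemma IsIndepTransversal.card_eq (hS : IsIndepTransversal G M S) (hM : IsMatching' G M)
    (hPM : ∀ x, MatchedBy M x) : S.card = M.card := by
  refine card_nbij _ (fun v _ => mk_mate_mem (hPM v)) (injOn_mk_mate fun v => (hS.2 v).mp)
    fun e he => ?_
  induction e using Sym2.ind with
  | h a b =>
    rw [hM.eq_mk_mate he (Sym2.mem_mk_left a b)]
    by_cases ha : a ∈ S
    · exact ⟨a, ha, rfl⟩
    · refine ⟨mate M a, not_not.mp (mt (hS.2 a).mpr ha), ?_⟩
      change s(mate M a, mate M (mate M a)) = _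
      rw [hM.mate_mate (hPM a), Sym2.eq_swap]

lemma isIndepTransversal_of_card_le (hM : IsMatching' G M) (hPM : ∀ x, MatchedBy M x)
    (hind : ∀ u ∈ S, ∀ w ∈ S, ¬G.Adj u w) (hcard : M.card ≤ S.card) :
    IsIndepTransversal G M S := by
  have hS : ∀ v ∈ S, mate M v ∉ S := fun v hv hmv => hind v hv _ hmv (hM.adj_mate (hPM v))
  have hsurj := surjOn_of_injOn_of_card_le _ (fun v _ => mk_mate_mem (hPM v))
    (injOn_mk_mate hS) hcard
  refine ⟨hind, fun v => ⟨hS v, fun hv => ?_⟩⟩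
  obtain ⟨u, hu, huv⟩ := hsurj (mk_mate_mem (hPM v))
  have hu' : u ∈ s(v, mate M v) := huv ▸ Sym2.mem_mk_left u (mate M u)
  rcases Sym2.mem_iff.mp hu' with rfl | rfl
  · exact hu
  · exact absurd hu hv

lemma IsMatching'.card_biUnion_toFinset [DecidableEq V] (hM : IsMatching' G M) :
    (M.biUnion Sym2.toFinset).card = 2 * M.card := by
  rw [card_biUnion, sum_const_nat fun e he =>
    Sym2.card_toFinset_of_not_isDiag e (G.not_isDiag_of_mem_edgeSet (hM.1 he)), mul_comm]
  intro e he f hf hne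
  rw [Function.onFun, Finset.disjoint_left]
  intro v hve hvf
  exact hne (hM.eq_of_mem_of_mem he hf (Sym2.mem_toFinset.mp hve) (Sym2.mem_toFinset.mp hvf))

section Fintype

variable [Fintype V]

lemma IsMatching'.two_mul_card_le (hM : IsMatching' G M) : 2 * M.card ≤ Fintype.card V := by
  classical
  exact hM.card_biUnion_toFinset ▸ card_le_univ _

lemma IsMatching'.card_eq_of_perfect (hM : IsMatching' G M) (hPM : ∀ x, MatchedBy M x) :
    Fintype.card V = 2 * M.card := by
  classical
  rw [← hM.card_biUnion_toFinset, ← card_univ]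
  congr 1
  refine (eq_univ_of_forall fun v => ?_).symm
  obtain ⟨e, he, hve⟩ := hPM v
  exact mem_biUnion.mpr ⟨e, he, Sym2.mem_toFinset.mpr hve⟩

lemma IsMatching'.card_add_card_le (hM : IsMatching' G M)
    (hS : ∀ u ∈ S, ∀ w ∈ S, ¬G.Adj u w) : S.card + M.card ≤ Fintype.card V := by
  classical
  have hinter : (S ∩ M.biUnion Sym2.toFinset).card ≤ M.card := by
    rw [inter_biUnion, ← mul_one M.card]
    refine card_biUnion_le_card_mul _ _ _ fun e he => card_le_one.mpr fun a ha b hb => ?_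
    rw [mem_inter, Sym2.mem_toFinset] at ha hb
    by_contra hab
    rw [(Sym2.mem_and_mem_iff hab).mp ⟨ha.2, hb.2⟩] at he
    exact hS a ha.1 b hb.1 (hM.1 he)
  have hunion := card_union_add_card_inter S (M.biUnion Sym2.toFinset)
  have huniv := card_le_univ (S ∪ M.biUnion Sym2.toFinset)
  have hcover := hM.card_biUnion_toFinset
  omega

lemma bddAbove_card_indep (G : SimpleGraph V) :
    BddAbove {n | ∃ S : Finset V, (∀ u ∈ S, ∀ w ∈ S, ¬G.Adj u w) ∧ S.card = n} :=
  ⟨Fintype.card V, by rintro _ ⟨S, _, rfl⟩; exact card_le_univ S⟩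

lemma exists_indep_card_eq_indepNum (G : SimpleGraph V) :
    ∃ S : Finset V, (∀ u ∈ S, ∀ w ∈ S, ¬G.Adj u w) ∧ S.card = _root_.indepNum G := by
  refine Nat.sSup_mem ?_ (bddAbove_card_indep G)
  exact ⟨0, ∅, by simp, rfl⟩

lemma card_le_indepNum (hind : ∀ u ∈ S, ∀ w ∈ S, ¬G.Adj u w) : S.card ≤ _root_.indepNum G :=
  le_csSup (bddAbove_card_indep G) ⟨S, hind, rfl⟩

lemma bddAbove_card_isMatching' (G : SimpleGraph V) :
    BddAbove {n | ∃ M : Finset (Sym2 V), IsMatching' G M ∧ M.card = n} :=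
  ⟨Fintype.card (Sym2 V), by rintro _ ⟨M, _, rfl⟩; exact card_le_univ M⟩

lemma exists_isMatching'_card_eq_matchNum (G : SimpleGraph V) :
    ∃ M : Finset (Sym2 V), IsMatching' G M ∧ M.card = matchNum G := by
  refine Nat.sSup_mem ?_ (bddAbove_card_isMatching' G)
  exact ⟨0, ∅, ⟨by simp, by simp⟩, rfl⟩

lemma IsMatching'.card_le_matchNum (hM : IsMatching' G M) : M.card ≤ matchNum G :=
  le_csSup (bddAbove_card_isMatching' G) ⟨M, hM, rfl⟩

lemma indepNum_add_matchNum_le (G : SimpleGraph V) :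
    _root_.indepNum G + matchNum G ≤ Fintype.card V := by
  obtain ⟨S, hS, hSα⟩ := exists_indep_card_eq_indepNum G
  obtain ⟨M, hM, hMμ⟩ := exists_isMatching'_card_eq_matchNum G
  exact hSα ▸ hMμ ▸ hM.card_add_card_le hS

lemma two_mul_matchNum_le (G : SimpleGraph V) : 2 * matchNum G ≤ Fintype.card V := by
  obtain ⟨M, hM, hMμ⟩ := exists_isMatching'_card_eq_matchNum G
  exact hMμ ▸ hM.two_mul_card_le

lemma isKE_iff_exists_isIndepTransversal (hM : IsMatching' G M) (hPM : ∀ x, MatchedBy M x) :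
    IsKE G ↔ ∃ S, IsIndepTransversal G M S := by
  have hV := hM.card_eq_of_perfect hPM
  have hαμ := indepNum_add_matchNum_le G
  have hμ := hM.card_le_matchNum
  refine ⟨fun hKE => ?_, fun ⟨S, hS⟩ => ?_⟩
  · obtain ⟨S, hind, hSα⟩ := exists_indep_card_eq_indepNum G
    have hμ' := two_mul_matchNum_le G
    exact ⟨S, isIndepTransversal_of_card_le hM hPM hind (by unfold IsKE at hKE; omega)⟩
  · have hα := card_le_indepNum hS.1
    have hSM := hS.card_eq hM hPM
    unfold IsKE
    omega

end Fintype

section AltList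

variable {α : Type*} {p : α → Prop} {r r' : ℕ} {l l₁ l₂ : List α}

/-- Alternation with parity offset `r`: the list starts with an entry satisfying `p` iff `r` is
odd. -/
def IsAltList (p : α → Prop) (r : ℕ) (l : List α) : Prop :=
  ∀ i (hi : i < l.length), p l[i] ↔ (i + r) % 2 = 1

lemma IsAltList.of_mod_eq (h : IsAltList p r l) (hr : r % 2 = r' % 2) : IsAltList p r' l :=
  fun i hi => (h i hi).trans (by omega)

lemma isAltList_append :
    IsAltList p r (l₁ ++ l₂) ↔ IsAltList p r l₁ ∧ IsAltList p (r + l₁.length) l₂ := by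
  refine ⟨fun h => ⟨fun i hi => ?_, fun i hi => ?_⟩, fun ⟨h₁, h₂⟩ i hi => ?_⟩
  · have := h i (by simp; omega)
    rwa [List.getElem_append_left hi] at this
  · have := h (l₁.length + i) (by simp; omega)
    rw [List.getElem_append_right (by omega)] at this
    simp only [Nat.add_sub_cancel_left] at this
    exact this.trans (by omega)
  · rw [List.getElem_append]
    split_ifs with hi₁
    · exact h₁ i hi₁
    · exact (h₂ _ (by simp at hi; omega)).trans (by omega)

lemma isAltList_cons {a : α} :
    IsAltList p r (a :: l) ↔ (p a ↔ r % 2 = 1) ∧ IsAltList p (r + 1) l := by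
  rw [← List.singleton_append, isAltList_append]
  refine and_congr ⟨fun h => (h 0 (by simp)).trans (by simp), fun h i hi => ?_⟩ Iff.rfl
  obtain rfl : i = 0 := by simpa using hi
  exact h.trans (by simp)

lemma IsAltList.reverse (h : IsAltList p r l) : IsAltList p (r + l.length + 1) l.reverse :=
  fun i hi => by
    rw [List.getElem_reverse, h _ (by simp at hi; omega)]
    simp only [List.length_reverse] at hi
    omega

lemma IsAltList.isChain (h : IsAltList p r l) : l.IsChain (fun a b => p a ↔ ¬p b) :=
  List.isChain_iff_getElem.mpr fun i hi => by
    rw [h i (by omega), h (i + 1) hi]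
    omega

lemma IsAltList.length_filter [DecidablePred p] :
    ∀ {r : ℕ} {l : List α}, IsAltList p r l → (l.filter p).length = (l.length + r % 2) / 2
  | _, [], _ => by simp
  | r, a :: l, h => by
    obtain ⟨ha, hl⟩ := isAltList_cons.mp h
    rw [List.filter_cons, List.length_cons]
    split_ifs with hpa <;> simp only [decide_eq_true_eq] at hpa
    · simp only [List.length_cons, hl.length_filter]
      have := ha.mp hpa
      omega
    · simp only [hl.length_filter]
      have := mt ha.mpr hpa
      omega

lemma IsAltList.exists_head?_eq (h : IsAltList p r l) (hl : l ≠ []) :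
    ∃ a, l.head? = some a ∧ (p a ↔ r % 2 = 1) := by
  have hl : 0 < l.length := List.length_pos_iff.mpr hl
  exact ⟨l[0], by simp [List.head?_eq_getElem?], (h 0 hl).trans (by simp)⟩

lemma IsAltList.exists_getLast?_eq (h : IsAltList p r l) (hl : l ≠ []) :
    ∃ a, l.getLast? = some a ∧ (p a ↔ (l.length + r) % 2 = 0) := by
  have hl : 0 < l.length := List.length_pos_iff.mpr hl
  exact ⟨l[l.length - 1], by simp [List.getLast?_eq_getElem?], (h _ (by omega)).trans (by omega)⟩

end AltList

/- The 2-SAT argument: a maximal `r`-closed set containing no pair `x, σ x` contains one of each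
pair, since otherwise it could be enlarged by everything reachable from a literal `ℓ` outside it
with `ℓ` not reaching `σ ℓ`. -/
theorem exists_closed_transversal_of_not_reflTransGen {α : Type*} [Finite α] {σ : α → α}
    (hσ : Function.Involutive σ) {r : α → α → Prop} (hr : ∀ x y, r x y → r (σ y) (σ x))
    (h : ∀ x, ¬(ReflTransGen r x (σ x) ∧ ReflTransGen r (σ x) x)) :
    ∃ T : Finset α, (∀ x y, x ∈ T → r x y → y ∈ T) ∧ ∀ x, x ∈ T ↔ σ x ∉ T := by
  classical
  have := Fintype.ofFinite α
  have hrev : ∀ {a b}, ReflTransGen r a b → ReflTransGen r (σ b) (σ a) := fun hab =>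
    reflTransGen_swap.mp (ReflTransGen.lift σ hr _ _ hab)
  let P : Finset α → Prop := fun T =>
    (∀ x y, x ∈ T → ReflTransGen r x y → y ∈ T) ∧ ∀ x ∈ T, σ x ∉ T
  obtain ⟨T, -, hPT, hmax⟩ := Finite.exists_le_maximal (p := P) (a := ∅) ⟨by simp, by simp⟩
  refine ⟨T, fun x y hx hxy => hPT.1 x y hx (.single hxy), fun x => ⟨hPT.2 x, fun hσx => ?_⟩⟩
  by_contra hx
  obtain ⟨ℓ, hℓ, hσℓ, hℓσℓ⟩ : ∃ ℓ, ℓ ∉ T ∧ σ ℓ ∉ T ∧ ¬ReflTransGen r ℓ (σ ℓ) := by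
    by_cases hxσx : ReflTransGen r x (σ x)
    · refine ⟨σ x, hσx, by rwa [hσ x], ?_⟩
      rw [hσ x]
      exact fun hσxx => h x ⟨hxσx, hσxx⟩
    · exact ⟨x, hx, hσx, hxσx⟩
  let T' := T ∪ univ.filter (ReflTransGen r ℓ)
  have hmem : ∀ y, y ∈ T' ↔ y ∈ T ∨ ReflTransGen r ℓ y := by simp [T']
  have hPT' : P T' := by
    refine ⟨fun y z hy hyz => ?_, fun y hy hσy => ?_⟩
    · rcases (hmem y).mp hy with hy | hy
      · exact (hmem z).mpr (.inl (hPT.1 y z hy hyz))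
      · exact (hmem z).mpr (.inr (hy.trans hyz))
    · rcases (hmem y).mp hy with hy | hy <;> rcases (hmem (σ y)).mp hσy with hσy | hσy
      · exact hPT.2 y hy hσy
      · exact hσℓ (hPT.1 y _ hy (hσ y ▸ hrev hσy))
      · exact hσℓ (hPT.1 _ _ hσy (hrev hy))
      · exact hℓσℓ (hy.trans (hσ y ▸ hrev hσy))
  exact hℓ (hmax hPT' subset_union_left ((hmem ℓ).mpr (.inr .refl)))

lemma IsIndepTransversal.mem_iff_of_isAltWalk (hS : IsIndepTransversal G M S)
    (hM : IsMatching' G M) :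
    ∀ {a b : V} (W : G.Walk a b), IsAltWalk M W → (∀ e ∈ W.edges.head?, e ∈ M ↔ a ∉ S) →
      (b ∈ S ↔ (Even W.length ↔ a ∈ S))
  | _, _, .nil, _, _ => by simp
  | a, _, .cons (v := c) hac W, halt, hstart => by
    rw [IsAltWalk, Walk.edges_cons, List.Chain', List.isChain_cons] at halt
    have hac_mem : s(a, c) ∈ M ↔ a ∉ S := hstart _ rfl
    have hc : c ∈ S ↔ s(a, c) ∈ M := by
      by_cases he : s(a, c) ∈ M
      · refine iff_of_true ?_ he
        rw [← hM.mate_eq he]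
        exact not_not.mp (mt (hS.2 a).mpr (hac_mem.mp he))
      · exact iff_of_false (hS.1 a (not_not.mp (mt hac_mem.mpr he)) c · hac) he
    have ih := hS.mem_iff_of_isAltWalk hM W halt.2 fun f hf => by
      have := halt.1 f hf
      rw [hc]
      tauto
    rw [ih, Walk.length_cons, Nat.even_add_one, hc]
    tauto

section NoJposy

variable [DecidableEq V]

lemma IsIndepTransversal.base_notMem (hS : IsIndepTransversal G M S) (hM : IsMatching' G M)
    {b : V} {c : G.Walk b b} (hc : IsBlossom G M c) : b ∉ S := by
  obtain ⟨-, hodd, halt, -, hbase⟩ := hc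
  cases c with
  | nil => simp at hodd
  | @cons _ x _ h c' =>
    intro hb
    have hfirst : s(b, x) ∉ M := fun he => hbase _ (by simp) he (Sym2.mem_mk_left _ _)
    have := hS.mem_iff_of_isAltWalk hM _ halt fun e he => by
      obtain rfl := Option.mem_some_iff.mp he
      exact iff_of_false hfirst (not_not.mpr hb)
    have := Nat.not_even_iff_odd.mpr hodd
    tauto

lemma IsIndepTransversal.not_isJposy (hS : IsIndepTransversal G M S) (hM : IsMatching' G M)
    {b₁ b₂ : V} {c₁ : G.Walk b₁ b₁} {c₂ : G.Walk b₂ b₂} {w : G.Walk b₁ b₂} :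
    ¬IsJposy G M c₁ c₂ w := by
  rintro ⟨hc₁, hc₂, hodd, halt, ⟨e, he, heM⟩, -⟩
  have hb₁ := hS.base_notMem hM hc₁
  have := hS.mem_iff_of_isAltWalk hM w halt fun f hf => by
    obtain rfl : e = f := Option.some_injective _ (he ▸ hf)
    exact iff_of_true heM hb₁
  have := Nat.not_even_iff_odd.mpr hodd
  exact hS.base_notMem hM hc₂ (by tauto)

end NoJposy

lemma SimpleGraph.Walk.exists_eq_append_of_not_nodup :
    ∀ {a b : V} (W : G.Walk a b), ¬W.support.Nodup →
      ∃ (u : V) (P : G.Walk a u) (C : G.Walk u u) (Q : G.Walk u b),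
        W = P.append (C.append Q) ∧ ¬C.Nil ∧ C.support.tail.Nodup
  | _, _, .nil, hW => absurd (List.nodup_singleton _) hW
  | a, _, .cons h q, hW => by
    classical
    by_cases hq : q.support.Nodup
    · have ha : a ∈ q.support := by
        by_contra ha
        exact hW (by simp [List.nodup_cons, ha, hq])
      refine ⟨a, .nil, .cons h (q.takeUntil a ha), q.dropUntil a ha, ?_, Walk.not_nil_cons, ?_⟩
      · rw [Walk.nil_append, Walk.cons_append, Walk.take_spec]
      · rw [Walk.support_cons, List.tail_cons]
        exact (q.support_takeUntil_prefix_support ha).sublist.nodup hq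
    · obtain ⟨u, P, C, Q, rfl, hC, hCnd⟩ := q.exists_eq_append_of_not_nodup hq
      exact ⟨u, .cons h P, C, Q, rfl, hC, hCnd⟩

lemma SimpleGraph.Walk.isCycle_of_nodup_tail {u : V} (C : G.Walk u u)
    (hC : C.support.tail.Nodup) (hodd : Odd C.length) : C.IsCycle := by
  cases C with
  | nil => simp at hodd
  | @cons _ x _ h p =>
    rw [Walk.support_cons, List.tail_cons] at hC
    have hp : p.IsPath := Walk.IsPath.mk' hC
    refine (Walk.cons_isCycle_iff p h).mpr ⟨hp, fun hmem => ?_⟩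
    cases p with
    | nil => exact G.loopless.irrefl _ h
    | @cons _ y _ h' q =>
      rw [Walk.cons_isPath_iff] at hp
      rcases List.mem_cons.mp hmem with hux | hq
      · obtain rfl : y = u := by
          rcases Sym2.eq_iff.mp hux with ⟨rfl, -⟩ | ⟨rfl, -⟩
          · exact absurd h (G.loopless.irrefl _)
          · rfl
        have := Walk.length_eq_zero_iff.mpr (Walk.isPath_iff_nil.mp hp.1)
        simp only [Walk.length_cons, this, Nat.odd_iff] at hodd
        omega
      · exact hp.2 (q.snd_mem_support_of_mem_edges hq)

lemma SimpleGraph.Walk.IsCycle.eq_zero_or_eq_length_sub_one_of_start_mem {u : V} {c : G.Walk u u}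
    (hc : c.IsCycle) {i : ℕ} (hi : i < c.edges.length) (hu : u ∈ c.edges[i]) :
    i = 0 ∨ i = c.length - 1 := by
  rw [Walk.getElem_edges, Sym2.mem_iff] at hu
  rw [Walk.length_edges] at hi
  rcases hu with hu | hu
  · have := (hc.getVert_endpoint_iff (by omega)).mp hu.symm
    omega
  · have := (hc.getVert_endpoint_iff (by omega)).mp hu.symm
    omega

lemma IsMatching'.not_isAltList_one_of_isCycle (hM : IsMatching' G M) {u : V} {c : G.Walk u u}
    (hc : c.IsCycle) (hodd : Odd c.length) : ¬IsAltList (· ∈ M) 1 c.edges := by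
  intro halt
  have h3 := hc.three_le_length
  have hlen := c.length_edges
  have hfirst : u ∈ c.edges[0] := by simp [Walk.getElem_edges]
  have hlast : u ∈ c.edges[c.length - 1] := by
    simp [Walk.getElem_edges, Nat.sub_add_cancel (by omega : 1 ≤ c.length)]
  have hne : c.edges[0] ≠ c.edges[c.length - 1] := fun h => by
    have := hc.edges_nodup.getElem_inj_iff.mp h
    omega
  rw [Nat.odd_iff] at hodd
  exact hne (hM.eq_of_mem_of_mem ((halt 0 _).mpr (by omega)) ((halt _ _).mpr (by omega))
    hfirst hlast)

def MateStep (G : SimpleGraph V) (M : Finset (Sym2 V)) (x y : V) : Prop :=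
  ∃ z, G.Adj x z ∧ s(x, z) ∉ M ∧ mate M z = y

lemma MateStep.mate_mate (hM : IsMatching' G M) (hPM : ∀ x, MatchedBy M x)
    (h : MateStep G M x y) : MateStep G M (mate M y) (mate M x) := by
  obtain ⟨z, hxz, hxzM, rfl⟩ := h
  rw [hM.mate_mate (hPM z)]
  exact ⟨x, hxz.symm, Sym2.eq_swap ▸ hxzM, rfl⟩

lemma exists_isAltList_of_reflTransGen (hM : IsMatching' G M) (hPM : ∀ x, MatchedBy M x)
    (h : ReflTransGen (MateStep G M) x y) :
    ∃ W : G.Walk x y, IsAltList (· ∈ M) 0 W.edges ∧ Even W.length := by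
  induction h with
  | refl => exact ⟨.nil, fun i hi => by simp at hi, by simp⟩
  | tail _ hstep ih =>
    obtain ⟨W, hW, hWeven⟩ := ih
    obtain ⟨z, hbz, hbzM, rfl⟩ := hstep
    refine ⟨W.append (.cons hbz (.cons (hM.adj_mate (hPM z)) .nil)), ?_, ?_⟩
    · rw [Walk.edges_append, isAltList_append, Walk.length_edges]
      simp only [Walk.edges_cons, Walk.edges_nil, isAltList_cons, mk_mate_mem (hPM z), hbzM,
        false_iff, true_iff, Nat.even_iff, zero_add] at hWeven ⊢
      exact ⟨hW, by omega, by omega, fun i hi => by simp at hi⟩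
    · simp only [Walk.length_append, Walk.length_cons, Walk.length_nil, Nat.even_iff] at hWeven ⊢
      omega

lemma exists_odd_isAltList_of_reflTransGen_mate (hM : IsMatching' G M)
    (hPM : ∀ x, MatchedBy M x) (h : ReflTransGen (MateStep G M) x (mate M x)) :
    ∃ O : G.Walk x x, IsAltList (· ∈ M) 0 O.edges ∧ Odd O.length := by
  rcases h.cases_tail with hx | ⟨b, hxb, z, hbz, hbzM, hz⟩
  · have hadj := hM.adj_mate (hPM x)
    rw [hx] at hadj
    exact absurd hadj (G.loopless.irrefl x)
  · obtain rfl : z = x := by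
      rw [← hM.mate_mate (hPM z), hz, hM.mate_mate (hPM x)]
    obtain ⟨W, hW, hWeven⟩ := exists_isAltList_of_reflTransGen hM hPM hxb
    refine ⟨W.append (.cons hbz .nil), ?_, ?_⟩
    · rw [Walk.edges_append, isAltList_append, Walk.length_edges]
      simp only [Walk.edges_cons, Walk.edges_nil, isAltList_cons, hbzM, false_iff,
        Nat.even_iff, zero_add] at hWeven ⊢
      exact ⟨hW, by omega, fun i hi => by simp at hi⟩
    · simp only [Walk.length_append, Walk.length_cons, Walk.length_nil, Nat.even_iff,
        Nat.odd_iff] at hWeven ⊢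
      omega

section Jposy

variable [DecidableEq V]

lemma isBlossom_of_isAltList {b : V} {c : G.Walk b b} (hc : c.IsCycle)
    (halt : IsAltList (· ∈ M) 0 c.edges) (hodd : Odd c.length) : IsBlossom G M c := by
  refine ⟨hc, hodd, halt.isChain, ?_, fun e he heM hbe => ?_⟩
  · have : c.edges.toFinset ∩ M = (c.edges.filter (· ∈ M)).toFinset := by ext; simp
    rw [this, List.toFinset_card_of_nodup (hc.edges_nodup.filter _), halt.length_filter,
      c.length_edges]
    rw [Nat.odd_iff] at hodd
    omega
  · obtain ⟨i, hi, rfl⟩ := List.getElem_of_mem he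
    have := (halt i hi).mp heM
    rw [Nat.odd_iff] at hodd
    rcases hc.eq_zero_or_eq_length_sub_one_of_start_mem hi hbe with rfl | rfl <;> omega

lemma IsMatching'.exists_isBlossom_of_isAltList (hM : IsMatching' G M) (O : G.Walk v v)
    (halt : IsAltList (· ∈ M) 0 O.edges) (hodd : Odd O.length) :
    ∃ (b : V) (c : G.Walk b b) (A : G.Walk v b),
      IsBlossom G M c ∧ IsAltList (· ∈ M) 0 A.edges ∧ Even A.length := by
  induction hn : O.length using Nat.strong_induction_on generalizing v with
  | _ n ih =>
    have hnd : ¬O.support.Nodup := fun h => by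
      rw [Walk.length_eq_zero_iff.mpr (Walk.isPath_iff_nil.mp (Walk.IsPath.mk' h))] at hodd
      simp at hodd
    obtain ⟨u, P, C, Q, rfl, hCnil, hCnd⟩ := O.exists_eq_append_of_not_nodup hnd
    simp only [Walk.edges_append, isAltList_append, Walk.length_edges, zero_add] at halt
    obtain ⟨hP, hC, hQ⟩ := halt
    simp only [Walk.length_append, Nat.odd_iff] at hodd hn
    have hCpos : 0 < C.length := Walk.not_nil_iff_lt_length.mp hCnil
    rcases Nat.even_or_odd C.length with hCeven | hCodd
    · rw [Nat.even_iff] at hCeven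
      refine ih _ (by omega) (P.append Q) ?_ ?_ (Walk.length_append _ _)
      · rw [Walk.edges_append, isAltList_append, Walk.length_edges]
        exact ⟨hP, hQ.of_mod_eq (by omega)⟩
      · rw [Walk.length_append, Nat.odd_iff]
        omega
    · have hcyc := C.isCycle_of_nodup_tail hCnd hCodd
      rcases Nat.even_or_odd P.length with hPeven | hPodd
      · refine ⟨u, C, P, isBlossom_of_isAltList hcyc (hC.of_mod_eq ?_) hCodd, hP, hPeven⟩
        rw [Nat.even_iff] at hPeven
        omega
      · refine absurd (hC.of_mod_eq ?_) (hM.not_isAltList_one_of_isCycle hcyc hCodd)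
        rw [Nat.odd_iff] at hPodd
        omega

lemma isJposy_of_isAltList {b₁ b₂ : V} {c₁ : G.Walk b₁ b₁} {c₂ : G.Walk b₂ b₂}
    {w : G.Walk b₁ b₂} (hc₁ : IsBlossom G M c₁) (hc₂ : IsBlossom G M c₂)
    (hw : IsAltList (· ∈ M) 1 w.edges) (hodd : Odd w.length) : IsJposy G M c₁ c₂ w := by
  rw [Nat.odd_iff] at hodd
  have hne : w.edges ≠ [] := List.ne_nil_of_length_pos (by rw [w.length_edges]; omega)
  obtain ⟨e, he, heM⟩ := hw.exists_head?_eq hne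
  obtain ⟨f, hf, hfM⟩ := hw.exists_getLast?_eq hne
  exact ⟨hc₁, hc₂, Nat.odd_iff.mpr hodd, hw.isChain, ⟨e, he, heM.mpr rfl⟩,
    ⟨f, hf, hfM.mpr (by rw [w.length_edges]; omega)⟩⟩

lemma exists_isJposy_of_reflTransGen (hM : IsMatching' G M) (hPM : ∀ x, MatchedBy M x)
    (h₁ : ReflTransGen (MateStep G M) x (mate M x))
    (h₂ : ReflTransGen (MateStep G M) (mate M x) x) :
    ∃ (b₁ b₂ : V) (c₁ : G.Walk b₁ b₁) (c₂ : G.Walk b₂ b₂) (w : G.Walk b₁ b₂),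
      IsJposy G M c₁ c₂ w := by
  replace h₂ : ReflTransGen (MateStep G M) (mate M x) (mate M (mate M x)) := by
    rwa [hM.mate_mate (hPM x)]
  obtain ⟨O₁, hO₁, hodd₁⟩ := exists_odd_isAltList_of_reflTransGen_mate hM hPM h₁
  obtain ⟨O₂, hO₂, hodd₂⟩ := exists_odd_isAltList_of_reflTransGen_mate hM hPM h₂
  obtain ⟨b₁, c₁, A₁, hc₁, hA₁, hA₁even⟩ := hM.exists_isBlossom_of_isAltList O₁ hO₁ hodd₁
  obtain ⟨b₂, c₂, A₂, hc₂, hA₂, hA₂even⟩ := hM.exists_isBlossom_of_isAltList O₂ hO₂ hodd₂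
  rw [Nat.even_iff] at hA₁even hA₂even
  refine ⟨b₁, b₂, c₁, c₂, A₁.reverse.append (.cons (hM.adj_mate (hPM x)) A₂),
    isJposy_of_isAltList hc₁ hc₂ ?_ ?_⟩
  · rw [Walk.edges_append, Walk.edges_reverse, Walk.edges_cons, isAltList_append,
      isAltList_cons, List.length_reverse, A₁.length_edges]
    refine ⟨hA₁.reverse.of_mod_eq ?_, ?_, hA₂.of_mod_eq ?_⟩
    · rw [A₁.length_edges]
      omega
    · exact iff_of_true (mk_mate_mem (hPM x)) (by omega)
    · omega
  · rw [Walk.length_append, Walk.length_reverse, Walk.length_cons, Nat.odd_iff]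
    omega

lemma exists_isIndepTransversal_of_not_isJposy [Finite V] (hM : IsMatching' G M)
    (hPM : ∀ x, MatchedBy M x)
    (h : ¬∃ (b₁ b₂ : V) (c₁ : G.Walk b₁ b₁) (c₂ : G.Walk b₂ b₂) (w : G.Walk b₁ b₂),
      IsJposy G M c₁ c₂ w) :
    ∃ S, IsIndepTransversal G M S := by
  obtain ⟨T, hclosed, hT⟩ := exists_closed_transversal_of_not_reflTransGen
    (fun x => hM.mate_mate (hPM x)) (fun _ _ => MateStep.mate_mate hM hPM)
    fun x ⟨h₁, h₂⟩ => h (exists_isJposy_of_reflTransGen hM hPM h₁ h₂)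
  refine ⟨T, fun u hu w hw huw => ?_, hT⟩
  by_cases he : s(u, w) ∈ M
  · exact (hT u).mp hu (hM.mate_eq he ▸ hw)
  · exact (hT w).mp hw (hclosed u _ hu ⟨w, huw, he, rfl⟩)

end Jposy

end

/-- A graph with a perfect matching is König–Egerváry iff it has no
`M`-Jposy relative to any perfect matching `M`. -/
theorem stmt_7 {V : Type*} [DecidableEq V] [Fintype V] (G : SimpleGraph V)
    (hpm : ∃ M : Finset (Sym2 V), IsMatching' G M ∧ ∀ x : V, MatchedBy M x) :
    IsKE G ↔ ∀ M : Finset (Sym2 V), IsMatching' G M → (∀ x : V, MatchedBy M x) →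
      ¬ ∃ (b₁ b₂ : V) (c₁ : G.Walk b₁ b₁) (c₂ : G.Walk b₂ b₂) (w : G.Walk b₁ b₂),
        IsJposy G M c₁ c₂ w := by
  obtain ⟨M₀, hM₀, hPM₀⟩ := hpm
  refine ⟨fun hKE M hM hPM ⟨_, _, _, _, _, hw⟩ => ?_, fun h => ?_⟩
  · obtain ⟨S, hS⟩ := (isKE_iff_exists_isIndepTransversal hM hPM).mp hKE
    exact hS.not_isJposy hM hw
  · exact (isKE_iff_exists_isIndepTransversal hM₀ hPM₀).mpr
      (exists_isIndepTransversal_of_not_isJposy hM₀ hPM₀ (h M₀ hM₀ hPM₀))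
end

section
/- Let M be a maximum matching of G and let F be an M-flower with stem endpoint u (the M-unmatched vertex) and blossom B with base b. Then the symmetric difference of M with the edge set of the stem is again a maximum matching M' of G, M' leaves b unmatched by edges of the stem path, and B remains an M'-blossom whose base b is M'-unmatched, so G contains an M'-flower with trivial stem. -/
open SimpleGraph

variable {V : Type*} [DecidableEq V]

/-!
Read the stem backwards: it is an even alternating path starting at the unmatched vertex `u`,
so its edges pair up as (non-matching, matching). Exchanging one such pair keeps a matching of
the same size and moves the unmatched vertex two steps along the path; after the whole stem
has been flipped, `b` is unmatched. The stem meets the blossom only in `b`, so it shares no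
edge with it and the blossom keeps its alternation and its count of matched edges.
-/

section Flower

variable {α : Type*} {G : SimpleGraph α}

theorem IsAltWalk.congr {M N : Finset (Sym2 α)} {x y : α} {w : G.Walk x y}
    (hw : IsAltWalk M w) (h : ∀ e ∈ w.edges, e ∈ M ↔ e ∈ N) : IsAltWalk N w :=
  List.IsChain.imp_of_mem_imp (fun e f he hf hef => by rwa [← h e he, ← h f hf]) hw

theorem IsAltWalk.reverse {M : Finset (Sym2 α)} {x y : α} {w : G.Walk x y}
    (hw : IsAltWalk M w) : IsAltWalk M w.reverse := by
  unfold IsAltWalk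
  rw [Walk.edges_reverse]
  exact List.isChain_reverse.mpr (hw.imp fun e f h => by tauto)

theorem IsBlossom.congr [DecidableEq α] {M N : Finset (Sym2 α)} {b : α} {c : G.Walk b b}
    (hc : IsBlossom G M c) (h : ∀ e ∈ c.edges, e ∈ M ↔ e ∈ N) : IsBlossom G N c := by
  obtain ⟨hcycle, hodd, halt, hcount, hbase⟩ := hc
  have hinter : c.edges.toFinset ∩ N = c.edges.toFinset ∩ M := by
    ext e
    simp only [Finset.mem_inter, List.mem_toFinset]
    exact and_congr_right fun he => (h e he).symm
  exact ⟨hcycle, hodd, halt.congr h, hinter ▸ hcount,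
    fun e he heN => hbase e he ((h e he).mpr heN)⟩

theorem SimpleGraph.Walk.notMem_edges_of_common_support_eq {a b c d v : α} {p : G.Walk a b}
    {q : G.Walk c d} (h : ∀ x ∈ p.support, x ∈ q.support → x = v) {e : Sym2 α}
    (hp : e ∈ p.edges) : e ∉ q.edges := by
  induction e with
  | _ x y =>
    intro hq
    have hx := h x (p.fst_mem_support_of_mem_edges hp) (q.fst_mem_support_of_mem_edges hq)
    have hy := h y (p.snd_mem_support_of_mem_edges hp) (q.snd_mem_support_of_mem_edges hq)
    exact G.ne_of_adj (p.adj_of_mem_edges hp) (hx.trans hy.symm)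

theorem IsMatching'.mono {M N : Finset (Sym2 α)} (hM : IsMatching' G M) (hNM : N ⊆ M) :
    IsMatching' G N :=
  ⟨fun _ he => hM.1 (hNM he), fun e he f hf => hM.2 e (hNM he) f (hNM hf)⟩

theorem IsMatching'.eq_of_mem {M : Finset (Sym2 α)} (hM : IsMatching' G M) {e f : Sym2 α}
    (he : e ∈ M) (hf : f ∈ M) {v : α} (hve : v ∈ e) (hvf : v ∈ f) : e = f :=
  by_contra fun hef => hM.2 e he f hf hef v ⟨hve, hvf⟩

theorem IsMatching'.insert_of_not_matchedBy [DecidableEq α] {M : Finset (Sym2 α)}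
    (hM : IsMatching' G M) {e : Sym2 α} (he : e ∈ G.edgeSet)
    (hfree : ∀ v ∈ e, ¬ MatchedBy M v) : IsMatching' G (insert e M) := by
  refine ⟨by simpa [Set.insert_subset_iff] using ⟨he, hM.1⟩, ?_⟩
  rintro f hf g hg hfg v ⟨hvf, hvg⟩
  rcases Finset.mem_insert.mp hf with rfl | hfM <;> rcases Finset.mem_insert.mp hg with rfl | hgM
  · exact hfg rfl
  · exact hfree v hvf ⟨g, hgM, hvg⟩
  · exact hfree v hvg ⟨f, hfM, hvf⟩
  · exact hM.2 f hfM g hgM hfg v ⟨hvf, hvg⟩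

theorem IsMatching'.exchange [DecidableEq α] {M : Finset (Sym2 α)} (hM : IsMatching' G M)
    {x y z : α} (hxy : G.Adj x y) (hyz : s(y, z) ∈ M) (hxz : x ≠ z) (hx : ¬ MatchedBy M x) :
    IsMatching' G (insert s(x, y) (M.erase s(y, z))) ∧
      (insert s(x, y) (M.erase s(y, z))).card = M.card ∧
      ¬ MatchedBy (insert s(x, y) (M.erase s(y, z))) z := by
  have hxyM : s(x, y) ∉ M.erase s(y, z) := fun h => hx ⟨_, Finset.mem_of_mem_erase h, by simp⟩
  have hfree : ∀ {v}, v ∈ s(y, z) → ¬ MatchedBy (M.erase s(y, z)) v := by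
    rintro v hv ⟨f, hf, hvf⟩
    exact (Finset.mem_erase.mp hf).1 (hM.eq_of_mem (Finset.mem_of_mem_erase hf) hyz hvf hv)
  refine ⟨(hM.mono (Finset.erase_subset _ _)).insert_of_not_matchedBy hxy ?_, ?_, ?_⟩
  · intro v hv
    rcases Sym2.mem_iff.mp hv with rfl | rfl
    · exact fun ⟨f, hf, hvf⟩ => hx ⟨f, Finset.mem_of_mem_erase hf, hvf⟩
    · exact hfree (Sym2.mem_mk_left _ _)
  · rw [Finset.card_insert_of_notMem hxyM, Finset.card_erase_add_one hyz]
  · rintro ⟨f, hf, hzf⟩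
    rcases Finset.mem_insert.mp hf with rfl | hfM
    · rcases Sym2.mem_iff.mp hzf with h | h
      · exact hxz h.symm
      · exact G.ne_of_adj (hM.1 hyz) h.symm
    · exact hfree (Sym2.mem_mk_right _ _) ⟨f, hfM, hzf⟩

theorem IsMatching'.symmDiff_edges_of_even [DecidableEq α] :
    ∀ {M : Finset (Sym2 α)} {x y : α} (p : G.Walk x y), IsMatching' G M → p.IsPath →
      Even p.length → IsAltWalk M p →
    ¬ MatchedBy M x →
    IsMatching' G (symmDiff M p.edges.toFinset) ∧
      (symmDiff M p.edges.toFinset).card = M.card ∧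
      ¬ MatchedBy (symmDiff M p.edges.toFinset) y
  | _, _, _, .nil, hM, _, _, _, hx => by simpa [← Finset.bot_eq_empty] using ⟨hM, hx⟩
  | _, _, _, .cons _ .nil, _, _, heven, _, _ => by simp at heven
  | M, x, _, .cons (v := y) hxy (.cons (v := z) hyz q), hM, hp, heven, halt, hx => by
    have hnodup := hp.isTrail.edges_nodup
    simp only [Walk.edges_cons, List.nodup_cons, List.mem_cons, not_or] at hnodup
    simp only [Walk.cons_isPath_iff, Walk.support_cons, List.mem_cons, not_or] at hp
    have hxyM : s(x, y) ∉ M := fun h => hx ⟨_, h, Sym2.mem_mk_left _ _⟩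
    have hyzM : s(y, z) ∈ M := by
      have := (List.isChain_cons_cons.mp halt).1
      tauto
    have hxz : x ≠ z := fun h => hnodup.1.1 (h ▸ Sym2.eq_swap)
    set M₁ := insert s(x, y) (M.erase s(y, z))
    have hagree : ∀ e ∈ q.edges, e ∈ M ↔ e ∈ M₁ := fun e he => by
      simp [M₁, Finset.mem_erase, ne_of_mem_of_not_mem he hnodup.1.2,
        ne_of_mem_of_not_mem he hnodup.2.1]
    have hflip : symmDiff M (Walk.cons hxy (.cons hyz q)).edges.toFinset =
        symmDiff M₁ q.edges.toFinset := by
      ext e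
      simp only [Walk.edges_cons, List.toFinset_cons, Finset.mem_symmDiff, Finset.mem_insert,
        List.mem_toFinset, M₁, Finset.mem_erase]
      rcases eq_or_ne e s(x, y) with rfl | h₁
      · simp [hxyM, hnodup.1.2]
      rcases eq_or_ne e s(y, z) with rfl | h₂
      · simp [hyzM, hnodup.2.1, hxz.symm, Ne.symm hp.2.1]
      simp [h₁, h₂]
    obtain ⟨hM₁, hcard, hz⟩ := hM.exchange hxy hyzM hxz hx
    rw [hflip, ← hcard]
    exact symmDiff_edges_of_even q hM₁ hp.1.1 (by simpa [Nat.even_add_one] using heven)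
      (IsAltWalk.congr (w := q) halt.tail.tail hagree) hz

end Flower

/-- Flipping a maximum matching along the stem of an `M`-flower yields a
maximum matching `M'` which leaves the base `b` unmatched (in particular by stem
edges), and the blossom remains an `M'`-blossom; hence `G` has an `M'`-flower with
trivial stem. -/
theorem stmt_17 {V : Type*} [DecidableEq V] (G : SimpleGraph V) (M : Finset (Sym2 V))
    (hM : IsMaxMatching G M) {b u : V} (c : G.Walk b b) (s : G.Walk b u)
    (hF : IsFlower G M c s) :
    IsMaxMatching G (symmDiff M s.edges.toFinset) ∧
    (∀ e ∈ symmDiff M s.edges.toFinset, e ∈ s.edges → b ∉ e) ∧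
    IsBlossom G (symmDiff M s.edges.toFinset) c ∧
    (∀ e ∈ symmDiff M s.edges.toFinset, b ∉ e) := by
  obtain ⟨hblossom, hpath, heven, halt, hu, hshare⟩ := hF
  obtain ⟨hmatch, hcard, hb⟩ : IsMatching' G (symmDiff M s.edges.toFinset) ∧
      (symmDiff M s.edges.toFinset).card = M.card ∧
      ¬ MatchedBy (symmDiff M s.edges.toFinset) b := by
    simpa using hM.1.symmDiff_edges_of_even s.reverse hpath.reverse (by simpa using heven)
      halt.reverse hu
  have hbfree : ∀ e ∈ symmDiff M s.edges.toFinset, b ∉ e :=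
    fun e he hbe => hb ⟨e, he, hbe⟩
  refine ⟨⟨hmatch, fun N hN => hcard ▸ hM.2 N hN⟩, fun e he _ => hbfree e he,
    hblossom.congr fun e he => ?_, hbfree⟩
  have hes : e ∉ s.edges := Walk.notMem_edges_of_common_support_eq
    (fun x hc hs => hshare x hs hc) he
  simp [Finset.mem_symmDiff, hes]
end
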